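/- Let b > 0 and let u, v : [0,∞) → ℝ be smooth with u(0)=v(0)=0 and sufficient decay at infinity (all products of u,v and their derivatives up to order two times e^{2bx} tend to 0). Then ∫_0^∞ (e^{2bx}−1) u_{xxx} v dx + ∫_0^∞ (e^{2bx}−1) v_{xxx} u dx = −8b^3 ∫_0^∞ u v e^{2bx} dx + 6b ∫_0^∞ u_x v_x e^{2bx} dx. -/

import Mathlib

/-!
For any weight `φ`, the boundary expression
`B = φ (u''v + uv'' - u'v') - φ' (uv)' + φ'' uv`
is an antiderivative of `φ (u'''v + uv''') - 3 φ' u'v' + φ''' uv`: the terms containing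
`u''v'`, `u'v''`, `u''v` and `uv''` cancel in pairs. For `φ = e^{2bx} - 1` we have `B(0) = 0`
because `φ(0) = u(0) = v(0) = 0`, and the decay hypotheses give `B → 0` at infinity (for the
unweighted part of `B` this needs `b ≥ 0`), so the integral of `B'` over `(0, ∞)` vanishes.
-/

open MeasureTheory Real Set Filter Topology

section ThirdOrderParts

variable {φ φ' φ'' φ''' u u' u'' u''' v v' v'' v''' : ℝ → ℝ}

def thirdOrderBoundary (φ φ' φ'' u u' u'' v v' v'' : ℝ → ℝ) (x : ℝ) : ℝ :=
  φ x * (u'' x * v x + u x * v'' x - u' x * v' x) - φ' x * (u' x * v x + u x * v' x)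
    + φ'' x * (u x * v x)

theorem hasDerivAt_thirdOrderBoundary {x : ℝ}
    (hφ1 : HasDerivAt φ (φ' x) x) (hφ2 : HasDerivAt φ' (φ'' x) x)
    (hφ3 : HasDerivAt φ'' (φ''' x) x)
    (hu1 : HasDerivAt u (u' x) x) (hu2 : HasDerivAt u' (u'' x) x)
    (hu3 : HasDerivAt u'' (u''' x) x)
    (hv1 : HasDerivAt v (v' x) x) (hv2 : HasDerivAt v' (v'' x) x)
    (hv3 : HasDerivAt v'' (v''' x) x) :
    HasDerivAt (thirdOrderBoundary φ φ' φ'' u u' u'' v v' v'')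
      (φ x * u''' x * v x + φ x * v''' x * u x - 3 * (u' x * v' x * φ' x)
        + u x * v x * φ''' x) x := by
  have := (hφ1.mul (((hu3.mul hv1).add (hu1.mul hv3)).sub (hu2.mul hv2))).sub
    (hφ2.mul ((hu2.mul hv1).add (hu1.mul hv2))) |>.add (hφ3.mul (hu1.mul hv1))
  exact this.congr_deriv (by simp only [Pi.add_apply, Pi.sub_apply, Pi.mul_apply]; ring)

theorem integral_Ioi_weight_mul_third_deriv_add
    (hφ1 : ∀ x, HasDerivAt φ (φ' x) x) (hφ2 : ∀ x, HasDerivAt φ' (φ'' x) x)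
    (hφ3 : ∀ x, HasDerivAt φ'' (φ''' x) x)
    (hu1 : ∀ x, HasDerivAt u (u' x) x) (hu2 : ∀ x, HasDerivAt u' (u'' x) x)
    (hu3 : ∀ x, HasDerivAt u'' (u''' x) x)
    (hv1 : ∀ x, HasDerivAt v (v' x) x) (hv2 : ∀ x, HasDerivAt v' (v'' x) x)
    (hv3 : ∀ x, HasDerivAt v'' (v''' x) x)
    (hφ0 : φ 0 = 0) (hu0 : u 0 = 0) (hv0 : v 0 = 0)
    (hlim : Tendsto (thirdOrderBoundary φ φ' φ'' u u' u'' v v' v'') atTop (𝓝 0))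
    (i1 : IntegrableOn (fun x => φ x * u''' x * v x) (Ioi 0))
    (i2 : IntegrableOn (fun x => φ x * v''' x * u x) (Ioi 0))
    (i3 : IntegrableOn (fun x => u' x * v' x * φ' x) (Ioi 0))
    (i4 : IntegrableOn (fun x => u x * v x * φ''' x) (Ioi 0)) :
    (∫ x in Ioi (0:ℝ), φ x * u''' x * v x) + (∫ x in Ioi (0:ℝ), φ x * v''' x * u x)
      = 3 * (∫ x in Ioi (0:ℝ), u' x * v' x * φ' x) - ∫ x in Ioi (0:ℝ), u x * v x * φ''' x := by
  have hderiv := fun x => hasDerivAt_thirdOrderBoundary (hφ1 x) (hφ2 x) (hφ3 x)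
    (hu1 x) (hu2 x) (hu3 x) (hv1 x) (hv2 x) (hv3 x)
  have hFTC := integral_Ioi_of_hasDerivAt_of_tendsto (hderiv 0).continuousAt.continuousWithinAt
    (fun x _ => hderiv x) (((i1.add i2).sub (i3.const_mul 3)).add i4) hlim
  have hB0 : thirdOrderBoundary φ φ' φ'' u u' u'' v v' v'' 0 = 0 := by
    simp [thirdOrderBoundary, hφ0, hu0, hv0]
  rw [integral_add, integral_sub, integral_add i1 i2, integral_const_mul, hB0] at hFTC
  · linarith
  exacts [i1.add i2, i3.const_mul 3, (i1.add i2).sub (i3.const_mul 3), i4]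

end ThirdOrderParts

theorem tendsto_zero_of_tendsto_mul_exp {f : ℝ → ℝ} {c : ℝ} (hc : 0 ≤ c)
    (hf : Tendsto (fun x => f x * exp (c * x)) atTop (𝓝 0)) : Tendsto f atTop (𝓝 0) := by
  have hbdd : IsBoundedUnder (· ≤ ·) atTop (fun x => ‖exp (-(c * x))‖) := by
    refine isBoundedUnder_of_eventually_le (a := 1) ?_
    filter_upwards [eventually_ge_atTop 0] with x hx
    rw [norm_of_nonneg (exp_pos _).le, exp_le_one_iff]
    nlinarith
  refine (hf.zero_mul_isBoundedUnder_le hbdd).congr fun x => ?_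
  rw [mul_assoc, ← exp_add, add_neg_cancel, exp_zero, mul_one]

theorem hasDerivAt_exp_const_mul (c x : ℝ) :
    HasDerivAt (fun x => exp (c * x)) (c * exp (c * x)) x := by
  simpa [mul_comm] using ((hasDerivAt_id x).const_mul c).exp

theorem tendsto_thirdOrderBoundary_exp {b : ℝ} (hb : 0 ≤ b) {u u' u'' v v' v'' : ℝ → ℝ}
    (d1 : Tendsto (fun x => u x * v'' x * exp (2*b*x)) atTop (𝓝 0))
    (d2 : Tendsto (fun x => v x * u'' x * exp (2*b*x)) atTop (𝓝 0))
    (d3 : Tendsto (fun x => u' x * v' x * exp (2*b*x)) atTop (𝓝 0))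
    (d4 : Tendsto (fun x => u x * v' x * exp (2*b*x)) atTop (𝓝 0))
    (d5 : Tendsto (fun x => v x * u' x * exp (2*b*x)) atTop (𝓝 0))
    (d6 : Tendsto (fun x => u x * v x * exp (2*b*x)) atTop (𝓝 0)) :
    Tendsto (thirdOrderBoundary (fun x => exp (2*b*x) - 1) (fun x => 2*b*exp (2*b*x))
      (fun x => 4*b^2*exp (2*b*x)) u u' u'' v v' v'') atTop (𝓝 0) := by
  have hc : 0 ≤ 2 * b := by positivity
  have e1 := tendsto_zero_of_tendsto_mul_exp hc d1
  have e2 := tendsto_zero_of_tendsto_mul_exp hc d2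
  have e3 := tendsto_zero_of_tendsto_mul_exp hc d3
  have hsum := (((((d2.add d1).sub d3).sub ((e2.add e1).sub e3)).sub (d5.const_mul (2*b))).sub
    (d4.const_mul (2*b))).add (d6.const_mul (4*b^2))
  simp only [add_zero, sub_zero, mul_zero] at hsum
  exact hsum.congr fun x => by simp only [thirdOrderBoundary]; ring

theorem stmt_10 (b : ℝ) (hb : 0 < b)
    (u u' u'' u''' v v' v'' v''' : ℝ → ℝ)
    (hu1 : ∀ x, HasDerivAt u (u' x) x)
    (hu2 : ∀ x, HasDerivAt u' (u'' x) x)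
    (hu3 : ∀ x, HasDerivAt u'' (u''' x) x)
    (hv1 : ∀ x, HasDerivAt v (v' x) x)
    (hv2 : ∀ x, HasDerivAt v' (v'' x) x)
    (hv3 : ∀ x, HasDerivAt v'' (v''' x) x)
    (hu0 : u 0 = 0) (hv0 : v 0 = 0)
    (d1 : Tendsto (fun x => u x * v'' x * Real.exp (2*b*x)) atTop (𝓝 0))
    (d2 : Tendsto (fun x => v x * u'' x * Real.exp (2*b*x)) atTop (𝓝 0))
    (d3 : Tendsto (fun x => u' x * v' x * Real.exp (2*b*x)) atTop (𝓝 0))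
    (d4 : Tendsto (fun x => u x * v' x * Real.exp (2*b*x)) atTop (𝓝 0))
    (d5 : Tendsto (fun x => v x * u' x * Real.exp (2*b*x)) atTop (𝓝 0))
    (d6 : Tendsto (fun x => u x * v x * Real.exp (2*b*x)) atTop (𝓝 0))
    (i1 : IntegrableOn (fun x => (Real.exp (2*b*x) - 1) * u''' x * v x) (Set.Ioi 0))
    (i2 : IntegrableOn (fun x => (Real.exp (2*b*x) - 1) * v''' x * u x) (Set.Ioi 0))
    (i3 : IntegrableOn (fun x => u x * v x * Real.exp (2*b*x)) (Set.Ioi 0))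
    (i4 : IntegrableOn (fun x => u' x * v' x * Real.exp (2*b*x)) (Set.Ioi 0)) :
    (∫ x in Set.Ioi (0:ℝ), (Real.exp (2*b*x) - 1) * u''' x * v x)
      + (∫ x in Set.Ioi (0:ℝ), (Real.exp (2*b*x) - 1) * v''' x * u x)
      = -8 * b^3 * (∫ x in Set.Ioi (0:ℝ), u x * v x * Real.exp (2*b*x))
        + 6 * b * (∫ x in Set.Ioi (0:ℝ), u' x * v' x * Real.exp (2*b*x)) := by
  have hexp := hasDerivAt_exp_const_mul (2 * b)
  have key := integral_Ioi_weight_mul_third_deriv_add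
    (φ := fun x => exp (2*b*x) - 1) (φ' := fun x => 2*b*exp (2*b*x))
    (φ'' := fun x => 4*b^2*exp (2*b*x)) (φ''' := fun x => 8*b^3*exp (2*b*x))
    (fun x => (hexp x).sub_const 1)
    (fun x => ((hexp x).const_mul (2*b)).congr_deriv (by ring))
    (fun x => ((hexp x).const_mul (4*b^2)).congr_deriv (by ring))
    hu1 hu2 hu3 hv1 hv2 hv3 (by simp) hu0 hv0
    (tendsto_thirdOrderBoundary_exp hb.le d1 d2 d3 d4 d5 d6) i1 i2
    ((i4.const_mul (2*b)).congr (ae_of_all _ fun x => by ring))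
    ((i3.const_mul (8*b^3)).congr (ae_of_all _ fun x => by ring))
  have hpull : ∀ (c : ℝ) (f : ℝ → ℝ), ∫ x in Ioi (0:ℝ), f x * (c * exp (2*b*x))
      = c * ∫ x in Ioi (0:ℝ), f x * exp (2*b*x) := fun c f => by
    rw [← integral_const_mul]; congr with x; ring
  rw [key, hpull _ (fun x => u' x * v' x), hpull _ (fun x => u x * v x)]
  ring
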